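/- Let k be a field, n a positive integer, w = (w₁,…,w_n) ∈ ℤ_{≥0}ⁿ, and f ∈ k[x₁,…,x_n] a nonzero polynomial. Let f̄ ∈ k[x₁,…,x_n] be obtained from f by substituting x_i ↦ 0 for every i with w_i > 0 and leaving x_i unchanged when w_i = 0. Regard f and f̄ as Laurent polynomials via the natural inclusion. Then trop(f)(w) ≥ 0; if trop(f)(w) = 0 then f̄ = init_w f, and if trop(f)(w) > 0 then f̄ = 0. In particular, for any ideal J of k[x₁,…,x_n] and any f ∈ J, the image of f̄ in the Laurent polynomial ring lies in the initial ideal in_w(J·k[x₁^{±1},…,x_n^{±1}]). -/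

import Mathlib

noncomputable section
open scoped Classical

/-- The Laurent polynomial ring `k[x₁^{±1},…,x_n^{±1}]`, realized as the additive monoid
algebra on `ℤⁿ`. -/
abbrev Laur (k : Type*) [CommRing k] (n : ℕ) : Type _ := AddMonoidAlgebra k (Fin n → ℤ)

variable {k : Type*} {n : ℕ}

/-- The standard pairing `⟨u,w⟩ = ∑ i, uᵢ wᵢ`. -/
def pairZ (u w : Fin n → ℤ) : ℤ := ∑ i, u i * w i

/-- `trop(f)(w) = min {⟨u,w⟩ : u ∈ supp f}` (junk value for `f = 0`). -/
def tropZ [CommRing k] (w : Fin n → ℤ) (f : Laur k n) : ℤ :=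
  sInf ((fun u => pairZ u w) '' (f.coeff.support : Set (Fin n → ℤ)))

/-- `init_w f`: the sum of the terms of `f` whose exponent `u` satisfies
`⟨u,w⟩ = trop(f)(w)`; `init_w 0 = 0`. -/
def initZ [CommRing k] (w : Fin n → ℤ) (f : Laur k n) : Laur k n :=
  AddMonoidAlgebra.ofCoeff (Finsupp.filter (fun u => pairZ u w = tropZ w f) f.coeff)

/-- The initial ideal `in_w I`, generated by the initial forms of elements of `I`. -/
def initIdealZ [CommRing k] (w : Fin n → ℤ) (I : Ideal (Laur k n)) : Ideal (Laur k n) :=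
  Ideal.span {g | ∃ f ∈ I, g = initZ w f}

/-- `σ_{ξ,w}`: the `k`-algebra automorphism of the Laurent polynomial ring determined by
`x^u ↦ ξ^{⟨u,w⟩} x^u`. -/
def sigmaTw [Field k] (ξ : kˣ) (w : Fin n → ℤ) (f : Laur k n) : Laur k n :=
  AddMonoidAlgebra.ofCoeff (∑ u ∈ f.coeff.support, Finsupp.single u (((ξ ^ pairZ u w : kˣ) : k) * f.coeff u))

/-- The monomial `x^u` of the Laurent polynomial ring. -/
def xu [CommRing k] (u : Fin n → ℤ) : Laur k n := AddMonoidAlgebra.single u 1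

/-- The natural inclusion of the polynomial ring into the Laurent polynomial ring,
sending `xᵢ` to `x^{eᵢ}`. -/
def toLaurent [Field k] : MvPolynomial (Fin n) k →ₐ[k] Laur k n :=
  MvPolynomial.aeval (fun i => (xu (Pi.single i 1) : Laur k n))

/-! With `w ≥ 0`, every exponent `u` of a polynomial has `⟨u,w⟩ ≥ 0`, with equality exactly
when `x^u` involves no variable of positive weight, i.e. when the term survives the substitution.
So `f̄` is the part of `f` on which `⟨u,w⟩ = 0`: this is `init_w f` when `trop(f)(w) = 0`,
and empty when `trop(f)(w) > 0`. -/

open MvPolynomial AddMonoidAlgebra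

def intExponent {σ : Type*} : (σ →₀ ℕ) →+ (σ → ℤ) where
  toFun d i := d i
  map_zero' := by ext; simp
  map_add' d e := by ext; simp

@[simp]
lemma intExponent_apply {σ : Type*} (d : σ →₀ ℕ) (i : σ) : intExponent d i = d i := rfl

lemma intExponent_injective {σ : Type*} : Function.Injective (intExponent (σ := σ)) :=
  fun d e h => Finsupp.ext fun i => by simpa using congrFun h i

lemma toLaurent_eq_mapDomainAlgHom [Field k] :
    toLaurent (k := k) (n := n) = mapDomainAlgHom k k intExponent := by
  refine MvPolynomial.algHom_ext fun i => ?_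
  have : intExponent (Finsupp.single i 1) = Pi.single i (1 : ℤ) := by
    ext j
    rcases eq_or_ne j i with rfl | hj
    · simp
    · simp [hj]
  rw [toLaurent, aeval_X, xu, ← this]
  exact (AddMonoidAlgebra.mapDomain_single (f := intExponent)).symm

lemma aeval_ite_zero_X_monomial {σ R : Type*} [CommSemiring R] (s : σ → Prop) [DecidablePred s]
    (d : σ →₀ ℕ) (c : R) :
    aeval (fun i => if s i then 0 else X i) (monomial d c) =
      if ∀ i, s i → d i = 0 then monomial d c else 0 := by
  rw [aeval_monomial, monomial_eq]
  split_ifs with hd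
  · congr 1
    refine Finsupp.prod_congr fun i hi => ?_
    rw [if_neg fun hs => Finsupp.mem_support_iff.1 hi (hd i hs)]
  · push Not at hd
    obtain ⟨i, hs, hi⟩ := hd
    rw [Finsupp.prod, Finset.prod_eq_zero (Finsupp.mem_support_iff.2 hi) (by simp [hs, hi]),
      mul_zero]

lemma coeff_aeval_ite_zero_X {σ R : Type*} [CommSemiring R] (s : σ → Prop) [DecidablePred s]
    (f : MvPolynomial σ R) :
    AddMonoidAlgebra.coeff (aeval (fun i => if s i then 0 else X i) f) =
      (AddMonoidAlgebra.coeff f).filter fun d => ∀ i, s i → d i = 0 := by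
  induction f using MvPolynomial.induction_on' with
  | monomial d c =>
    rw [aeval_ite_zero_X_monomial]
    split_ifs with hd
    · exact (Finsupp.filter_single_of_pos _ hd).symm
    · exact (Finsupp.filter_single_of_neg _ hd).symm
  | add p q hp hq =>
    rw [map_add, AddMonoidAlgebra.coeff_add, AddMonoidAlgebra.coeff_add, hp, hq,
      Finsupp.filter_add]

lemma coeff_toLaurent [Field k] (f : MvPolynomial (Fin n) k) :
    (toLaurent f).coeff = (AddMonoidAlgebra.coeff f).mapDomain intExponent := by
  rw [toLaurent_eq_mapDomainAlgHom]
  rfl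

lemma support_toLaurent [Field k] (f : MvPolynomial (Fin n) k) :
    (toLaurent f).coeff.support = (AddMonoidAlgebra.coeff f).support.image intExponent := by
  rw [coeff_toLaurent]
  exact Finsupp.mapDomain_support_of_injective intExponent_injective _

lemma Finsupp.filter_mapDomain_of_injective {α β M : Type*} [AddCommMonoid M] {g : α → β}
    (hg : Function.Injective g) (p : β → Prop) [DecidablePred p] (v : α →₀ M) :
    (v.mapDomain g).filter p = (v.filter (p ∘ g)).mapDomain g := by
  ext b
  by_cases hb : b ∈ Set.range g
  · obtain ⟨a, rfl⟩ := hb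
    simp only [Finsupp.filter_apply, Finsupp.mapDomain_apply hg, Function.comp_apply]
  · simp [Finsupp.filter_apply, Finsupp.mapDomain_of_notMem_range _ _ hb]

lemma initZ_toLaurent [Field k] (w : Fin n → ℤ) (f : MvPolynomial (Fin n) k) :
    (initZ w (toLaurent f)).coeff = ((AddMonoidAlgebra.coeff f).filter
      fun d => pairZ (intExponent d) w = tropZ w (toLaurent f)).mapDomain intExponent := by
  rw [initZ, coeff_ofCoeff, coeff_toLaurent,
    Finsupp.filter_mapDomain_of_injective intExponent_injective]
  rfl

section NonnegWeight

variable (w : Fin n → ℕ)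

lemma pairZ_intExponent_nonneg (d : Fin n →₀ ℕ) :
    0 ≤ pairZ (intExponent d) (fun i => (w i : ℤ)) :=
  Finset.sum_nonneg fun _ _ => mul_nonneg (Nat.cast_nonneg _) (Nat.cast_nonneg _)

lemma pairZ_intExponent_eq_zero_iff (d : Fin n →₀ ℕ) :
    pairZ (intExponent d) (fun i => (w i : ℤ)) = 0 ↔ ∀ i, 0 < w i → d i = 0 := by
  simp only [pairZ, intExponent_apply]
  rw [Finset.sum_eq_zero_iff_of_nonneg fun i _ => by positivity]
  simp only [Finset.mem_univ, true_implies, mul_eq_zero, Nat.cast_eq_zero]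
  exact forall_congr' fun i => by omega

lemma pairZ_nonneg_of_mem_support_toLaurent [Field k] (f : MvPolynomial (Fin n) k) :
    ∀ u ∈ (toLaurent f).coeff.support, 0 ≤ pairZ u (fun i => (w i : ℤ)) := by
  intro u hu
  rw [support_toLaurent] at hu
  obtain ⟨d, -, rfl⟩ := Finset.mem_image.1 hu
  exact pairZ_intExponent_nonneg w d

lemma tropZ_toLaurent_nonneg [Field k] (f : MvPolynomial (Fin n) k) :
    0 ≤ tropZ (fun i => (w i : ℤ)) (toLaurent f) := by
  rcases (toLaurent f).coeff.support.eq_empty_or_nonempty with h | h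
  · simp [tropZ, h]
  · exact le_csInf ((Finset.coe_nonempty.2 h).image _)
      (Set.forall_mem_image.2 (pairZ_nonneg_of_mem_support_toLaurent w f))

lemma tropZ_toLaurent_le [Field k] (f : MvPolynomial (Fin n) k) {d : Fin n →₀ ℕ}
    (hd : f.coeff d ≠ 0) :
    tropZ (fun i => (w i : ℤ)) (toLaurent f) ≤
      pairZ (intExponent d) (fun i => (w i : ℤ)) := by
  refine csInf_le ⟨0, Set.forall_mem_image.2 (pairZ_nonneg_of_mem_support_toLaurent w f)⟩
    ⟨intExponent d, ?_, rfl⟩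
  rw [Finset.mem_coe, support_toLaurent]
  exact Finset.mem_image_of_mem _ (Finsupp.mem_support_iff.2 hd)

lemma toLaurent_aeval_ite_zero_X_of_tropZ_eq_zero [Field k] (f : MvPolynomial (Fin n) k)
    (ht : tropZ (fun i => (w i : ℤ)) (toLaurent f) = 0) :
    toLaurent (aeval (fun i => if 0 < w i then 0 else X i) f) =
      initZ (fun i => (w i : ℤ)) (toLaurent f) := by
  refine coeff_injective ?_
  rw [coeff_toLaurent, coeff_aeval_ite_zero_X, initZ_toLaurent, ht]
  simp only [pairZ_intExponent_eq_zero_iff]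
  -- the two filters now differ only in their `Decidable` instances
  congr

lemma aeval_ite_zero_X_eq_zero_of_tropZ_pos [Field k] (f : MvPolynomial (Fin n) k)
    (ht : 0 < tropZ (fun i => (w i : ℤ)) (toLaurent f)) :
    aeval (fun i => if 0 < w i then (0 : MvPolynomial (Fin n) k) else X i) f = 0 := by
  refine coeff_injective ?_
  rw [coeff_aeval_ite_zero_X, AddMonoidAlgebra.coeff_zero, Finsupp.filter_eq_zero_iff]
  intro d hd
  by_contra hfd
  have := tropZ_toLaurent_le w f hfd
  rw [(pairZ_intExponent_eq_zero_iff w d).2 hd] at this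
  omega

end NonnegWeight

theorem substitution_zero_initial_form_general [Field k] (w : Fin n → ℕ)
    (f : MvPolynomial (Fin n) k) :
    0 ≤ tropZ (fun i => (w i : ℤ)) (toLaurent f) ∧
    (tropZ (fun i => (w i : ℤ)) (toLaurent f) = 0 →
      toLaurent (MvPolynomial.aeval
          (fun i => if 0 < w i then (0 : MvPolynomial (Fin n) k) else MvPolynomial.X i) f) =
        initZ (fun i => (w i : ℤ)) (toLaurent f)) ∧
    (0 < tropZ (fun i => (w i : ℤ)) (toLaurent f) →
      MvPolynomial.aeval (fun i => if 0 < w i then (0 : MvPolynomial (Fin n) k) else MvPolynomial.X i) f = 0) ∧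
    ∀ J : Ideal (MvPolynomial (Fin n) k), f ∈ J →
      toLaurent (MvPolynomial.aeval
          (fun i => if 0 < w i then (0 : MvPolynomial (Fin n) k) else MvPolynomial.X i) f) ∈
        initIdealZ (fun i => (w i : ℤ)) (Ideal.map (toLaurent (k := k) (n := n)) J) := by
  refine ⟨tropZ_toLaurent_nonneg w f, toLaurent_aeval_ite_zero_X_of_tropZ_eq_zero w f,
    aeval_ite_zero_X_eq_zero_of_tropZ_pos w f, fun J hfJ => ?_⟩
  rcases (tropZ_toLaurent_nonneg w f).eq_or_lt with ht | ht
  · rw [toLaurent_aeval_ite_zero_X_of_tropZ_eq_zero w f ht.symm]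
    exact Ideal.subset_span ⟨toLaurent f, Ideal.mem_map_of_mem _ hfJ, rfl⟩
  · rw [aeval_ite_zero_X_eq_zero_of_tropZ_pos w f ht, map_zero]
    exact Ideal.zero_mem _

/-- Let `w ∈ ℤ_{≥0}ⁿ` and let `f` be a nonzero polynomial.  Let `f̄` be
obtained from `f` by substituting `xᵢ ↦ 0` whenever `wᵢ > 0`.  Then `trop(f)(w) ≥ 0`; if
`trop(f)(w) = 0` then `f̄ = init_w f`, and if `trop(f)(w) > 0` then `f̄ = 0`.  In
particular, for any ideal `J` of `k[x₁,…,x_n]` and `f ∈ J`, the image of `f̄` lies in the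
initial ideal `in_w (J·k[x₁^{±1},…,x_n^{±1}])`. -/
theorem substitution_zero_initial_form [Field k] (hn : 0 < n) (w : Fin n → ℕ)
    (f : MvPolynomial (Fin n) k) (hf : f ≠ 0) :
    0 ≤ tropZ (fun i => (w i : ℤ)) (toLaurent f) ∧
    (tropZ (fun i => (w i : ℤ)) (toLaurent f) = 0 →
      toLaurent (MvPolynomial.aeval
          (fun i => if 0 < w i then (0 : MvPolynomial (Fin n) k) else MvPolynomial.X i) f) =
        initZ (fun i => (w i : ℤ)) (toLaurent f)) ∧
    (0 < tropZ (fun i => (w i : ℤ)) (toLaurent f) →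
      MvPolynomial.aeval (fun i => if 0 < w i then (0 : MvPolynomial (Fin n) k) else MvPolynomial.X i) f = 0) ∧
    ∀ J : Ideal (MvPolynomial (Fin n) k), f ∈ J →
      toLaurent (MvPolynomial.aeval
          (fun i => if 0 < w i then (0 : MvPolynomial (Fin n) k) else MvPolynomial.X i) f) ∈
        initIdealZ (fun i => (w i : ℤ)) (Ideal.map (toLaurent (k := k) (n := n)) J) :=
  substitution_zero_initial_form_general w f

end
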